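/- For every π ∈ S_n, the permutation s(π)⁻¹ · π avoids 231 and has the same skeleton as π; consequently sw↓(π) = s(π)⁻¹ · π, where sw↓(π) denotes the unique 231-avoiding permutation with the same skeleton as π. -/

import Mathlib

/-- `l` is a permutation of `{1, …, n}`, written as a word. -/
def IsPermList (n : ℕ) (l : List ℕ) : Prop := l.Perm (List.range' 1 n)

/-- The word obtained from `l` by exchanging the positions of the entries `i` and `i+1`. -/
def swapEntries (i : ℕ) (l : List ℕ) : List ℕ :=
  l.map fun x => if x = i then i + 1 else if x = i + 1 then i else x

/-- Some entry larger than `i+1` appears (strictly) between the entries `i` and `i+1`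
in the word `l`. -/
def ToggleApplies (i : ℕ) (l : List ℕ) : Prop :=
  ∃ a ∈ l, i + 1 < a ∧
    min (l.idxOf i) (l.idxOf (i + 1)) < l.idxOf a ∧
    l.idxOf a < max (l.idxOf i) (l.idxOf (i + 1))

open scoped Classical in
/-- The polyurethane toggle `p i`. -/
noncomputable def toggle (i : ℕ) (l : List ℕ) : List ℕ :=
  if ToggleApplies i l then swapEntries i l else l

lemma max_getD_mem (l : List ℕ) (h : l ≠ []) : l.max?.getD 0 ∈ l := by
  rcases hm : l.max? with _ | m'
  · exact absurd (List.max?_eq_none_iff.mp hm) h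
  · simpa using List.max?_mem hm

lemma length_takeWhile_lt (p : ℕ → Bool) (l : List ℕ) (x : ℕ) (hx : x ∈ l) (hpx : p x = false) :
    (l.takeWhile p).length < l.length := by
  rcases Nat.lt_or_ge (l.takeWhile p).length l.length with h | h
  · exact h
  · have := List.takeWhile_eq_self_iff.mp ((List.takeWhile_sublist p).eq_of_length_le h) x hx
    rw [hpx] at this; exact absurd this (by simp)

lemma length_dropWhile_tail_lt (p : ℕ → Bool) (l : List ℕ) (h : l ≠ []) :
    ((l.dropWhile p).tail).length < l.length := by
  have h1 : (l.dropWhile p).length ≤ l.length := (List.dropWhile_sublist _).length_le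
  have h2 : ((l.dropWhile p).tail).length ≤ (l.dropWhile p).length - 1 := by
    simp [List.length_tail]
  have : 0 < l.length := List.length_pos_iff.mpr h
  omega

/-- West's stack-sorting map `s`: `s([]) = []` and `s(LmR) = s(L) s(R) m`,
where `m` is the largest entry. -/
def stackSort : List ℕ → List ℕ
  | [] => []
  | a :: rest =>
    stackSort ((a :: rest).takeWhile (· ≠ (a :: rest).max?.getD 0)) ++
      stackSort (((a :: rest).dropWhile (· ≠ (a :: rest).max?.getD 0)).tail) ++
      [(a :: rest).max?.getD 0]
termination_by l => l.length
decreasing_by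
  · exact length_takeWhile_lt _ _ _ (max_getD_mem (a :: rest) (by simp)) (by simp)
  · exact length_dropWhile_tail_lt _ _ (by simp)

/-- The inverse of the permutation `l` of `{1, …, n}`, as a word: its `k`-th entry is the
position (1-indexed) of the entry `k` in `l`. -/
def invw (l : List ℕ) : List ℕ := (List.range' 1 l.length).map fun k => l.idxOf k + 1

/-- The composition `l · m` of permutations written as words: `(l · m) j = l (m j)`. -/
def compw (l m : List ℕ) : List ℕ := m.map fun k => l.getD (k - 1) 0

/-- The group element `π⁻¹ · s(π)`, which encodes the skeleton of `π`: two permutations of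
`{1, …, n}` have the same skeleton if and only if their `skel`s coincide. -/
def skel (l : List ℕ) : List ℕ := compw (invw l) (stackSort l)

/-- `l` contains the pattern 231. -/
def Contains231 (l : List ℕ) : Prop :=
  ∃ j₁ j₂ j₃, j₁ < j₂ ∧ j₂ < j₃ ∧ j₃ < l.length ∧
    l.getD j₃ 0 < l.getD j₁ 0 ∧ l.getD j₁ 0 < l.getD j₂ 0

/-- `l` avoids the pattern 231. -/
def Avoids231 (l : List ℕ) : Prop := ¬ Contains231 l

/-- `l` avoids the pattern 132. -/
def Avoids132 (l : List ℕ) : Prop :=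
  ¬ ∃ j₁ j₂ j₃, j₁ < j₂ ∧ j₂ < j₃ ∧ j₃ < l.length ∧
    l.getD j₁ 0 < l.getD j₃ 0 ∧ l.getD j₃ 0 < l.getD j₂ 0

/-- `l` avoids the pattern 312. -/
def Avoids312 (l : List ℕ) : Prop :=
  ¬ ∃ j₁ j₂ j₃, j₁ < j₂ ∧ j₂ < j₃ ∧ j₃ < l.length ∧
    l.getD j₂ 0 < l.getD j₃ 0 ∧ l.getD j₃ 0 < l.getD j₁ 0

/-! Write `π = L m R` with `m` its largest entry, so that `s(π) = s(L) s(R) m`. The word of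
`σ = s(π)⁻¹ · π`, listing the positions in `s(π)` of the entries of `π`, is then the concatenation
`σ_L |π| (σ_R + |L|)` with `σ_L = s(L)⁻¹ · L` and `σ_R = s(R)⁻¹ · R`. By induction both blocks
avoid 231, every entry of the first block lies below every entry of the last, and the middle entry
is the largest, so no 231 can form. Moreover `s` sorts every 231-avoiding permutation `w`, so the
skeleton of such a `w` is `w⁻¹`. Hence the skeleton of `σ` is `σ⁻¹ = π⁻¹ · s(π)`, the skeleton of
`π`, and a 231-avoiding `m` with the same skeleton satisfies `m⁻¹ = σ⁻¹`. -/

open List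

theorem stackSort_append_cons {L R : List ℕ} {M : ℕ} (hL : ∀ x ∈ L, x < M)
    (hR : ∀ x ∈ R, x ≤ M) :
    stackSort (L ++ M :: R) = stackSort L ++ stackSort R ++ [M] := by
  have hmax : (L ++ M :: R).max? = some M := by
    refine max?_eq_some_iff.mpr ⟨by simp, fun b hb => ?_⟩
    rcases mem_append.mp hb with hb | hb
    · exact (hL b hb).le
    · rcases mem_cons.mp hb with rfl | hb
      exacts [le_rfl, hR b hb]
  have hLM : ∀ x ∈ L, decide (x ≠ M) = true := fun x hx => by simpa using (hL x hx).ne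
  obtain ⟨a, t, hat⟩ := exists_cons_of_ne_nil (l := L ++ M :: R) (by simp)
  rw [hat, stackSort, ← hat, hmax, Option.getD_some, takeWhile_append_of_pos hLM,
    dropWhile_append_of_pos hLM]
  simp

theorem stackSort_induction {P : List ℕ → Prop} (nil : P [])
    (append_cons : ∀ L M R, (∀ x ∈ L, x < M) → (∀ x ∈ R, x ≤ M) → P L → P R →
      P (L ++ M :: R)) (l : List ℕ) : P l := by
  induction h : l.length using Nat.strong_induction_on generalizing l with
  | _ n ih =>
  rcases eq_or_ne l [] with rfl | hl
  · exact nil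
  set M := l.max?.getD 0
  have hle : ∀ x ∈ l, x ≤ M := fun x hx => by
    obtain ⟨m, hm⟩ := Option.isSome_iff_exists.mp (isSome_max?_of_mem hx)
    simpa [M, hm] using (max?_eq_some_iff.mp hm).2 x hx
  have hdrop : l.dropWhile (· ≠ M) = M :: (l.dropWhile (· ≠ M)).tail := by
    have hne : l.dropWhile (· ≠ M) ≠ [] := fun hd => by
      simpa using dropWhile_eq_nil_iff.mp hd M (max_getD_mem l hl)
    have hhead := head_dropWhile_not (fun x => decide (x ≠ M)) hne
    simp only [decide_eq_false_iff_not, not_not] at hhead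
    conv_lhs => rw [← cons_head_tail hne, hhead]
  have hl_eq : l = l.takeWhile (· ≠ M) ++ M :: (l.dropWhile (· ≠ M)).tail := by
    rw [← hdrop, takeWhile_append_dropWhile]
  have hlen := congrArg length hl_eq
  simp only [length_append, length_cons] at hlen
  rw [hl_eq]
  refine append_cons _ _ _ (fun x hx => ?_) (fun x hx => hle x ?_)
    (ih _ (by omega) _ rfl) (ih _ (by omega) _ rfl)
  · exact lt_of_le_of_ne (hle x (takeWhile_subset _ hx)) (by simpa using mem_takeWhile_imp hx)
  · exact (dropWhile_sublist _).subset (mem_of_mem_tail hx)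

theorem stackSort_perm (l : List ℕ) : stackSort l ~ l := by
  induction l using stackSort_induction with
  | nil => simp [stackSort]
  | append_cons L M R hL hR ihL ihR =>
    rw [stackSort_append_cons hL hR, append_assoc]
    exact ihL.append ((ihR.append_right [M]).trans (perm_append_singleton M R))

theorem contains231_iff_exists_sublist {l : List ℕ} :
    Contains231 l ↔ ∃ a b c, [a, b, c] <+ l ∧ c < a ∧ a < b := by
  constructor
  · rintro ⟨j₁, j₂, j₃, h₁₂, h₂₃, h₃, hc, hb⟩
    have cons_sublist_drop : ∀ {i j t} (hj : j < l.length), i ≤ j → t <+ l.drop (j + 1) →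
        l[j] :: t <+ l.drop i := fun hj hij ht =>
      (ht.cons_cons _).trans (drop_eq_getElem_cons hj ▸ drop_sublist_drop_left l hij)
    rw [getD_eq_getElem _ _ h₃, getD_eq_getElem _ _ (by omega)] at hc
    rw [getD_eq_getElem _ _ (by omega), getD_eq_getElem _ _ (by omega)] at hb
    refine ⟨l[j₁], l[j₂], l[j₃], ?_, hc, hb⟩
    simpa using cons_sublist_drop (i := 0) (by omega) (Nat.zero_le _)
      (cons_sublist_drop (by omega) h₁₂ (cons_sublist_drop h₃ h₂₃ (nil_sublist _)))
  · rintro ⟨a, b, c, hs, hc, hb⟩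
    obtain ⟨f, hf⟩ := sublist_iff_exists_fin_orderEmbedding_get_eq.mp hs
    have ha : a = l[(f 0 : ℕ)] := hf 0
    have hb' : b = l[(f 1 : ℕ)] := hf 1
    have hc' : c = l[(f 2 : ℕ)] := hf 2
    refine ⟨f 0, f 1, f 2, f.lt_iff_lt.mpr (Fin.lt_def.mpr (by simp)),
      f.lt_iff_lt.mpr (Fin.lt_def.mpr (by simp)), (f 2).isLt, ?_, ?_⟩
    · rwa [getD_eq_getElem _ _ (f 2).isLt, getD_eq_getElem _ _ (f 0).isLt, ← ha, ← hc']
    · rwa [getD_eq_getElem _ _ (f 0).isLt, getD_eq_getElem _ _ (f 1).isLt, ← ha, ← hb']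

theorem Avoids231.sublist {l₁ l₂ : List ℕ} (h : l₁ <+ l₂) (h₂ : Avoids231 l₂) :
    Avoids231 l₁ := by
  rintro hc
  obtain ⟨a, b, c, hs, hca, hab⟩ := contains231_iff_exists_sublist.mp hc
  exact h₂ (contains231_iff_exists_sublist.mpr ⟨a, b, c, hs.trans h, hca, hab⟩)

theorem Avoids231.map {f : ℕ → ℕ} (hf : StrictMono f) {l : List ℕ} (h : Avoids231 l) :
    Avoids231 (l.map f) := by
  rintro hc
  obtain ⟨a, b, c, hs, hca, hab⟩ := contains231_iff_exists_sublist.mp hc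
  obtain ⟨l', hl', hl'eq⟩ := sublist_map_iff.mp hs
  match l', hl'eq with
  | [a', b', c'], hl'eq =>
    simp only [map_cons, map_nil, cons.injEq] at hl'eq
    obtain ⟨rfl, rfl, rfl, -⟩ := hl'eq
    exact h (contains231_iff_exists_sublist.mpr
      ⟨a', b', c', hl', hf.lt_iff_lt.mp hca, hf.lt_iff_lt.mp hab⟩)

theorem avoids231_append_cons_iff {L R : List ℕ} {M : ℕ} (hL : ∀ x ∈ L, x < M)
    (hR : ∀ x ∈ R, x < M) :
    Avoids231 (L ++ M :: R) ↔ Avoids231 L ∧ Avoids231 R ∧ ∀ x ∈ L, ∀ y ∈ R, x ≤ y := by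
  refine ⟨fun h => ⟨h.sublist (sublist_append_left _ _),
    h.sublist ((sublist_cons_self _ _).trans (sublist_append_right _ _)), fun x hx y hy => ?_⟩,
    fun ⟨hAL, hAR, hLR⟩ hc => ?_⟩
  · by_contra! hyx
    refine h (contains231_iff_exists_sublist.mpr ⟨x, M, y, ?_, hyx, hL x hx⟩)
    exact (singleton_sublist.mpr hx).append (cons_sublist_cons.mpr (singleton_sublist.mpr hy))
  · obtain ⟨a, b, c, hs, hca, hab⟩ := contains231_iff_exists_sublist.mp hc
    obtain ⟨l₁, l₂, hsplit, h₁, h₂⟩ := sublist_append_iff.mp hs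
    have hAL' := contains231_iff_exists_sublist.not.mp hAL
    have hAR' := contains231_iff_exists_sublist.not.mp hAR
    rcases l₁ with _ | ⟨a₁, _ | ⟨b₁, _ | ⟨c₁, _ | ⟨d₁, l₁⟩⟩⟩⟩ <;>
      simp only [nil_append, cons_append, cons.injEq] at hsplit
    · obtain rfl := hsplit
      rcases sublist_cons_iff.mp h₂ with h₂ | ⟨r, hr, h₂⟩
      · exact hAR' ⟨a, b, c, h₂, hca, hab⟩
      · simp only [cons.injEq] at hr
        obtain ⟨rfl, rfl⟩ := hr
        exact absurd (hR b (h₂.subset (by simp))) (by omega)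
    · obtain ⟨rfl, rfl⟩ := hsplit
      have hc : c ∈ R := by
        rcases sublist_cons_iff.mp h₂ with h₂ | ⟨r, hr, h₂⟩
        · exact h₂.subset (by simp)
        · simp only [cons.injEq] at hr
          exact h₂.subset (by simp [← hr.2])
      exact absurd (hLR a (singleton_sublist.mp h₁) c hc) (by omega)
    · obtain ⟨rfl, rfl, rfl⟩ := hsplit
      rcases mem_cons.mp (singleton_sublist.mp h₂) with rfl | hc
      · exact absurd (hL a (h₁.subset (by simp))) (by omega)
      · exact absurd (hLR a (h₁.subset (by simp)) c hc) (by omega)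
    · obtain ⟨rfl, rfl, rfl, rfl⟩ := hsplit
      exact hAL' ⟨a, b, c, h₁, hca, hab⟩
    · simp at hsplit

theorem pairwise_lt_stackSort {l : List ℕ} (hnd : l.Nodup) (h : Avoids231 l) :
    (stackSort l).Pairwise (· < ·) := by
  induction l using stackSort_induction with
  | nil => simp [stackSort]
  | append_cons L M R hL hR ihL ihR =>
    obtain ⟨hMLR, hndLR⟩ := nodup_cons.mp (nodup_middle.mp hnd)
    obtain ⟨hndL, hndR, hdisj⟩ := nodup_append.mp hndLR
    have hR' : ∀ x ∈ R, x < M :=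
      fun x hx => (hR x hx).lt_of_ne (by rintro rfl; exact hMLR (mem_append_right L hx))
    obtain ⟨hAL, hAR, hLR⟩ := (avoids231_append_cons_iff hL hR').mp h
    rw [stackSort_append_cons hL hR, pairwise_append, pairwise_append]
    simp only [(stackSort_perm L).mem_iff, (stackSort_perm R).mem_iff, mem_append,
      mem_singleton, pairwise_singleton]
    refine ⟨⟨ihL hndL hAL, ihR hndR hAR, fun x hx y hy => ?_⟩, trivial, ?_⟩
    · exact (hLR x hx y hy).lt_of_ne (by rintro rfl; exact hdisj x hx x hy rfl)
    · rintro x (hx | hx) y rfl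
      exacts [hL x hx, hR' x hx]

/-- The word of `s⁻¹ · l`: the entry `k` of `l` is replaced by its (1-indexed) position in `s`. -/
def positionsIn (s l : List ℕ) : List ℕ := l.map fun k => s.idxOf k + 1

theorem positionsIn_append_left {s₁ s₂ l : List ℕ} (h : ∀ k ∈ l, k ∈ s₁) :
    positionsIn (s₁ ++ s₂) l = positionsIn s₁ l :=
  map_congr_left fun k hk => by rw [idxOf_append_of_mem (h k hk)]

theorem positionsIn_append_right {s₁ s₂ l : List ℕ} (h : ∀ k ∈ l, k ∉ s₁) :
    positionsIn (s₁ ++ s₂) l = (positionsIn s₂ l).map (· + s₁.length) := by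
  simp only [positionsIn, map_map]
  exact map_congr_left fun k hk => by
    simp only [Function.comp, idxOf_append_of_notMem (h k hk)]; omega

theorem positionsIn_self {s : List ℕ} (hs : s.Nodup) : positionsIn s s = range' 1 s.length :=
  ext_getElem (by simp [positionsIn]) fun j _ _ => by
    simp [positionsIn, hs.idxOf_getElem, Nat.add_comm]

theorem positionsIn_perm_range' {s l : List ℕ} (hs : s.Nodup) (hl : l ~ s) :
    positionsIn s l ~ range' 1 s.length :=
  positionsIn_self hs ▸ hl.map _

theorem mem_positionsIn_stackSort_iff {l : List ℕ} (hnd : l.Nodup) {x : ℕ} :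
    x ∈ positionsIn (stackSort l) l ↔ 1 ≤ x ∧ x ≤ l.length := by
  have hp := stackSort_perm l
  rw [(positionsIn_perm_range' (hp.nodup_iff.mpr hnd) hp.symm).mem_iff, mem_range'_1,
    hp.length_eq]
  omega

theorem positionsIn_stackSort_append_cons {L R : List ℕ} {M : ℕ} (hL : ∀ x ∈ L, x < M)
    (hR : ∀ x ∈ R, x ≤ M) (hnd : (L ++ M :: R).Nodup) :
    positionsIn (stackSort (L ++ M :: R)) (L ++ M :: R) =
      positionsIn (stackSort L) L ++ (L.length + R.length + 1) ::
        (positionsIn (stackSort R) R).map (· + L.length) := by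
  obtain ⟨hMLR, hndLR⟩ := nodup_cons.mp (nodup_middle.mp hnd)
  have hdisj := (nodup_append.mp hndLR).2.2
  have hpL := stackSort_perm L
  have hpR := stackSort_perm R
  have hMs : M ∉ stackSort L ++ stackSort R := by simpa [hpL.mem_iff, hpR.mem_iff] using hMLR
  rw [stackSort_append_cons hL hR, positionsIn, map_append, map_cons, ← positionsIn,
    ← positionsIn, append_assoc, positionsIn_append_left (fun k => hpL.mem_iff.mpr),
    positionsIn_append_right (fun k hk hkL => hdisj k (hpL.mem_iff.mp hkL) k hk rfl),
    positionsIn_append_left (fun k => hpR.mem_iff.mpr), ← append_assoc,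
    idxOf_append_of_notMem hMs]
  simp [hpL.length_eq, hpR.length_eq]

theorem avoids231_positionsIn_stackSort {l : List ℕ} (hnd : l.Nodup) :
    Avoids231 (positionsIn (stackSort l) l) := by
  induction l using stackSort_induction with
  | nil => exact contains231_iff_exists_sublist.not.mpr (by simp [positionsIn])
  | append_cons L M R hL hR ihL ihR =>
    obtain ⟨hMLR, hndLR⟩ := nodup_cons.mp (nodup_middle.mp hnd)
    obtain ⟨hndL, hndR, -⟩ := nodup_append.mp hndLR
    have hmemL := fun x => mem_positionsIn_stackSort_iff hndL (x := x)
    have hmemR := fun x => mem_positionsIn_stackSort_iff hndR (x := x)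
    rw [positionsIn_stackSort_append_cons hL hR hnd, avoids231_append_cons_iff]
    · refine ⟨ihL hndL, (ihR hndR).map (strictMono_id.add_const _), ?_⟩
      simp only [mem_map]
      rintro x hx _ ⟨y, hy, rfl⟩
      have := (hmemL x).mp hx
      have := (hmemR y).mp hy
      omega
    · intro x hx
      have := (hmemL x).mp hx
      omega
    · simp only [mem_map]
      rintro _ ⟨y, hy, rfl⟩
      have := (hmemR y).mp hy
      omega

namespace IsPermList

variable {n : ℕ} {w : List ℕ}

theorem length_eq (h : IsPermList n w) : w.length = n := by
  simpa using Perm.length_eq h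

theorem nodup (h : IsPermList n w) : w.Nodup :=
  (Perm.nodup_iff h).mpr nodup_range'

theorem mem_iff (h : IsPermList n w) {x : ℕ} : x ∈ w ↔ 1 ≤ x ∧ x ≤ n := by
  rw [Perm.mem_iff h, mem_range'_1]
  omega

end IsPermList

theorem isPermList_positionsIn {n : ℕ} {s l : List ℕ} (hs : IsPermList n s)
    (hl : IsPermList n l) : IsPermList n (positionsIn s l) :=
  hs.length_eq ▸ positionsIn_perm_range' hs.nodup (hl.trans hs.symm)

theorem compw_invw_eq_positionsIn {s l : List ℕ} (h : ∀ k ∈ l, 1 ≤ k ∧ k ≤ s.length) :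
    compw (invw s) l = positionsIn s l :=
  map_congr_left fun k hk => by
    obtain ⟨h₁, h₂⟩ := h k hk
    rw [invw, getD_eq_getElem _ _ (by simp; omega), getElem_map, getElem_range']
    congr 2
    omega

theorem invw_eq_positionsIn (w : List ℕ) : invw w = positionsIn w (range' 1 w.length) := rfl

theorem positionsIn_range' {n : ℕ} {l : List ℕ} (h : ∀ k ∈ l, 1 ≤ k ∧ k ≤ n) :
    positionsIn (range' 1 n) l = l := by
  refine (map_congr_left fun k hk => ?_).trans (map_id l)
  obtain ⟨h₁, h₂⟩ := h k hk
  have hk' : (range' 1 n)[k - 1]'(by simp; omega) = k := by simp; omega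
  conv_lhs => rw [← hk', (nodup_range' (s := 1) (n := n)).idxOf_getElem]
  simp only [id]
  omega

theorem invw_positionsIn {n : ℕ} {s l : List ℕ} (hs : IsPermList n s) (hl : IsPermList n l) :
    invw (positionsIn s l) = positionsIn l s := by
  have hσ := isPermList_positionsIn hs hl
  refine ext_getElem (by simp [invw, positionsIn, hl.length_eq, hs.length_eq]) fun j hj _ => ?_
  have hj' : j < s.length := by simpa [invw, hσ.length_eq, ← hs.length_eq] using hj
  have hsj : s[j] ∈ l := hl.mem_iff.mpr (hs.mem_iff.mp (getElem_mem hj'))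
  have hi : l.idxOf s[j] < l.length := idxOf_lt_length_iff.mpr hsj
  have hσi : (positionsIn s l)[l.idxOf s[j]]'(by simpa [positionsIn]) = j + 1 := by
    simp [positionsIn, getElem_idxOf hi, hs.nodup.idxOf_getElem]
  simp only [invw, getElem_map, getElem_range', Nat.one_mul, Nat.add_comm 1 j]
  rw [← hσi, hσ.nodup.idxOf_getElem]
  simp [positionsIn]

theorem invw_invw {n : ℕ} {w : List ℕ} (h : IsPermList n w) : invw (invw w) = w := by
  rw [invw_eq_positionsIn w, h.length_eq, invw_positionsIn h (Perm.refl _),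
    positionsIn_range' fun k => h.mem_iff.mp]

theorem stackSort_eq_range'_of_avoids231 {n : ℕ} {w : List ℕ} (h : IsPermList n w)
    (hav : Avoids231 w) : stackSort w = range' 1 n :=
  ((stackSort_perm w).trans h).eq_of_pairwise' (pairwise_lt_stackSort h.nodup hav)
    pairwise_lt_range'

theorem skel_eq_invw_of_avoids231 {n : ℕ} {w : List ℕ} (h : IsPermList n w)
    (hav : Avoids231 w) : skel w = invw w := by
  rw [skel, stackSort_eq_range'_of_avoids231 h hav,
    compw_invw_eq_positionsIn fun k hk => by rw [h.length_eq]; have := mem_range'_1.mp hk; omega,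
    invw_eq_positionsIn, h.length_eq]

theorem swDown_eq (n : ℕ) (π : List ℕ) (hπ : IsPermList n π) :
    IsPermList n (compw (invw (stackSort π)) π) ∧
      Avoids231 (compw (invw (stackSort π)) π) ∧
      skel (compw (invw (stackSort π)) π) = skel π ∧
      ∀ m, IsPermList n m → Avoids231 m → skel m = skel π →
        m = compw (invw (stackSort π)) π := by
  have hs : IsPermList n (stackSort π) := (stackSort_perm π).trans hπ
  have hσ : compw (invw (stackSort π)) π = positionsIn (stackSort π) π :=
    compw_invw_eq_positionsIn fun k hk => hs.length_eq ▸ hπ.mem_iff.mp hk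
  have hperm : IsPermList n (positionsIn (stackSort π) π) := isPermList_positionsIn hs hπ
  have havoid : Avoids231 (positionsIn (stackSort π) π) :=
    avoids231_positionsIn_stackSort hπ.nodup
  have hskel : skel (positionsIn (stackSort π) π) = skel π := by
    rw [skel_eq_invw_of_avoids231 hperm havoid, invw_positionsIn hs hπ, skel,
      compw_invw_eq_positionsIn fun k hk => hπ.length_eq ▸ hs.mem_iff.mp hk]
  rw [hσ]
  refine ⟨hperm, havoid, hskel, fun m hm hmav hmskel => ?_⟩
  rw [← invw_invw hm, ← invw_invw hperm, ← skel_eq_invw_of_avoids231 hm hmav,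
    ← skel_eq_invw_of_avoids231 hperm havoid, hmskel, hskel]
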